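/- arXiv:2205.05594 — 3 statements merged into one kernel-verified Lean document; each statement's English description precedes it below -/
import Mathlib

section
/- If E is a uniformly random permutation of a finite set S and M ⊆ S is nonempty, then the permutation of M induced by cycle walking with E is uniformly distributed over all permutations of M. -/
/-!
If `ρ` is a permutation of `M`, extended by the identity outside `M`, then the walk of `ρ * E`
from a point of `M` visits the same points outside `M` as the walk of `E` and only the exit
point is moved by `ρ`; hence cycle walking turns `ρ * E` into `ρ * (cycle walk of E)`.
Left multiplication by the extension of `ρ` preserves the uniform measure on `Perm S`, so the
push-forward is invariant under left multiplication on `Perm M`, and the only such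
distribution on a finite group is the uniform one.
-/

open Function

namespace PMF

variable {α β : Type*}

theorem map_equiv_apply (p : PMF α) (e : α ≃ β) (b : β) : p.map e b = p (e.symm b) := by
  rw [map_apply, tsum_eq_single (e.symm b)]
  · simp
  · intro a ha
    rw [if_neg]
    rintro rfl
    exact ha (e.symm_apply_apply a).symm

theorem uniformOfFintype_map_equiv [Fintype α] [Nonempty α] [Fintype β] [Nonempty β]
    (e : α ≃ β) :
    (uniformOfFintype α).map e = uniformOfFintype β := by
  ext b
  rw [map_equiv_apply, uniformOfFintype_apply, uniformOfFintype_apply, Fintype.card_congr e]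

theorem eq_uniformOfFintype_of_map_mul_left {G : Type*} [Group G] [Fintype G] (p : PMF G)
    (hp : ∀ g : G, p.map (g * ·) = p) : p = uniformOfFintype G := by
  have hconst : ∀ x, p x = p 1 := fun x => by
    have h := p.map_equiv_apply (Equiv.mulLeft x) x
    simpa only [Equiv.coe_mulLeft, hp, Equiv.mulLeft_symm_apply, inv_mul_cancel] using h
  ext x
  rw [uniformOfFintype_apply, hconst]
  refine ENNReal.eq_inv_of_mul_eq_one_left ?_
  rw [mul_comm, ← p.tsum_coe, tsum_fintype, Finset.sum_congr rfl (fun x _ => hconst x),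
    Finset.sum_const, nsmul_eq_mul, Finset.card_univ]

theorem uniformOfFintype_map_eq_of_equivariant {G H : Type*} [Group G] [Fintype G] [Group H]
    [Fintype H] (φ : H →* G) (f : G → H) (hf : ∀ h g, f (φ h * g) = h * f g) :
    (uniformOfFintype G).map f = uniformOfFintype H := by
  refine eq_uniformOfFintype_of_map_mul_left _ fun h => ?_
  have hcomm : (h * ·) ∘ f = f ∘ Equiv.mulLeft (φ h) := funext fun g => (hf h g).symm
  rw [map_comp, hcomm, ← map_comp, uniformOfFintype_map_equiv]

end PMF

namespace Function

variable {α : Type*}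

def IsFirstReturn (f : α → α) (s : Set α) (x : α) (k : ℕ) : Prop :=
  0 < k ∧ (∀ j, 0 < j → j < k → f^[j] x ∉ s) ∧ f^[k] x ∈ s

theorem IsFirstReturn.eq {f : α → α} {s : Set α} {x : α} {k k' : ℕ}
    (h : IsFirstReturn f s x k) (h' : IsFirstReturn f s x k') : k = k' := by
  obtain ⟨hk, hmid, hend⟩ := h
  obtain ⟨hk', hmid', hend'⟩ := h'
  rcases lt_trichotomy k k' with hlt | heq | hgt
  · exact absurd hend (hmid' k hk hlt)
  · exact heq
  · exact absurd hend' (hmid k' hk' hgt)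

theorem iterate_comp_eq_of_fixes_compl {f g : α → α} {s : Set α} (hg : ∀ y ∉ s, g y = y)
    {x : α} {n : ℕ} (hn : ∀ j, 0 < j → j ≤ n → f^[j] x ∉ s) :
    (g ∘ f)^[n] x = f^[n] x := by
  induction n with
  | zero => rfl
  | succ n ih =>
    rw [iterate_succ_apply', iterate_succ_apply', ih fun j hj hjn => hn j hj (by omega),
      comp_apply, ← iterate_succ_apply' f, hg _ (hn _ n.succ_pos le_rfl)]

variable {f g : α → α} {s : Set α} {x : α} {k : ℕ}

theorem IsFirstReturn.iterate_comp_left (h : IsFirstReturn f s x k) (hg : ∀ y ∉ s, g y = y) :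
    (g ∘ f)^[k] x = g (f^[k] x) := by
  obtain ⟨n, rfl⟩ := Nat.exists_eq_add_one_of_ne_zero h.1.ne'
  rw [iterate_succ_apply', iterate_comp_eq_of_fixes_compl hg fun j hj hjn => h.2.1 j hj (by omega),
    comp_apply, iterate_succ_apply']

theorem IsFirstReturn.comp_left (h : IsFirstReturn f s x k) (hg : ∀ y ∉ s, g y = y)
    (hgs : Set.MapsTo g s s) : IsFirstReturn (g ∘ f) s x k := by
  refine ⟨h.1, fun j hj hjk => ?_, ?_⟩
  · rw [iterate_comp_eq_of_fixes_compl hg fun i hi hij => h.2.1 i hi (by omega)]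
    exact h.2.1 j hj hjk
  · rw [h.iterate_comp_left hg]
    exact hgs h.2.2

end Function

open Function Equiv

theorem cycleWalk_ofSubtype_mul {S : Type*} {p : S → Prop} [DecidablePred p]
    (cw : Perm S → Perm (Subtype p))
    (hcw : ∀ E : Perm S, ∀ m : Subtype p,
      ∃ k, IsFirstReturn E {x | p x} m k ∧ E^[k] m = cw E m)
    (ρ : Perm (Subtype p)) (E : Perm S) : cw (Perm.ofSubtype ρ * E) = ρ * cw E := by
  ext m
  obtain ⟨k, hk, hkE⟩ := hcw E m
  obtain ⟨k', hk', hkE'⟩ := hcw (Perm.ofSubtype ρ * E) m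
  have hfix : ∀ y ∉ {x | p x}, Perm.ofSubtype ρ y = y := fun _ hy =>
    Perm.ofSubtype_apply_of_not_mem ρ hy
  have hmaps : Set.MapsTo (Perm.ofSubtype ρ) {x | p x} {x | p x} := fun y hy =>
    (Perm.ofSubtype_apply_mem_iff_mem ρ y).2 hy
  rw [Perm.coe_mul] at hk' hkE'
  rw [← hkE', ← (hk.comp_left hfix hmaps).eq hk', hk.iterate_comp_left hfix, hkE,
    Perm.ofSubtype_apply_coe, Perm.coe_mul, comp_apply]

theorem stmt_14_general (S : Type*) [Fintype S] [DecidableEq S] (M : Finset S)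
    (cw : Equiv.Perm S → Equiv.Perm M)
    (hcw : ∀ E : Equiv.Perm S, ∀ m : M, ∃ k : ℕ, 0 < k ∧
      (∀ j : ℕ, 0 < j → j < k → (⇑E)^[j] (m : S) ∉ M) ∧
      (⇑E)^[k] (m : S) = ((cw E) m : S)) :
    (PMF.uniformOfFintype (Equiv.Perm S)).map cw
      = PMF.uniformOfFintype (Equiv.Perm M) := by
  have hcw' : ∀ E : Perm S, ∀ m : M,
      ∃ k, IsFirstReturn E {x | x ∈ M} m k ∧ E^[k] m = cw E m :=
    fun E m =>
      let ⟨k, hk, hmid, hend⟩ := hcw E m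
      ⟨k, ⟨hk, hmid, hend ▸ (cw E m).2⟩, hend⟩
  exact PMF.uniformOfFintype_map_eq_of_equivariant Perm.ofSubtype cw
    (cycleWalk_ofSubtype_mul cw hcw')

theorem stmt_14 (S : Type*) [Fintype S] [DecidableEq S] (M : Finset S) (hM : M.Nonempty)
    (cw : Equiv.Perm S → Equiv.Perm M)
    (hcw : ∀ E : Equiv.Perm S, ∀ m : M, ∃ k : ℕ, 0 < k ∧
      (∀ j : ℕ, 0 < j → j < k → (⇑E)^[j] (m : S) ∉ M) ∧
      (⇑E)^[k] (m : S) = ((cw E) m : S)) :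
    (PMF.uniformOfFintype (Equiv.Perm S)).map cw
      = PMF.uniformOfFintype (Equiv.Perm M) :=
  stmt_14_general S M cw hcw
end

section
/- Barret reduction is correct: let b be an n-bit positive integer, a a positive integer with a < 2^{m} and a < b², where m = bit-length of a, and set q = ⌊2^{m+1}/b⌋ and r = a - ⌊aq/2^{m+1}⌋·b. Then 0 ≤ r < 2b, and consequently a mod b equals r if r < b and r - b otherwise. -/
/-!
With `q = ⌊M / b⌋` we have `M - b < q b ≤ M`, so `a q / M` underestimates `a / b` by less than
`a / M < 1`; flooring costs at most one more. Hence the estimated quotient `t = ⌊a q / M⌋` satisfies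
`a - 2b < t b ≤ a`, and `r = a - t b` is congruent to `a` modulo `b` and lies in `[0, 2b)`, so one
conditional subtraction of `b` reduces it.
-/

namespace Int

def barrettQuotient (M a b : ℤ) : ℤ := a * (M / b) / M

variable {M a b : ℤ}

theorem barrettQuotient_mul_le (hM : 0 < M) (ha : 0 ≤ a) (hb : 0 < b) :
    barrettQuotient M a b * b ≤ a := by
  have hqb : M / b * b ≤ M := Int.ediv_mul_le M hb.ne'
  have htM : barrettQuotient M a b * M ≤ a * (M / b) := Int.ediv_mul_le _ hM.ne'
  refine le_of_mul_le_mul_right ?_ hM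
  calc barrettQuotient M a b * b * M = barrettQuotient M a b * M * b := by ring
    _ ≤ a * (M / b) * b := mul_le_mul_of_nonneg_right htM hb.le
    _ = a * (M / b * b) := by ring
    _ ≤ a * M := mul_le_mul_of_nonneg_left hqb ha

theorem lt_barrettQuotient_add_two_mul (ha : 0 ≤ a) (haM : a < M) (hb : 0 < b) :
    a < (barrettQuotient M a b + 2) * b := by
  have hM : 0 < M := ha.trans_lt haM
  have hqb : M < (M / b + 1) * b := lt_ediv_add_one_mul_self M hb
  have htM : a * (M / b) < (barrettQuotient M a b + 1) * M := lt_ediv_add_one_mul_self _ hM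
  refine lt_of_mul_lt_mul_right ?_ hM.le
  calc a * M ≤ a * (M / b * b + b) := mul_le_mul_of_nonneg_left (by linarith) ha
    _ = a * (M / b) * b + a * b := by ring
    _ < (barrettQuotient M a b + 1) * M * b + M * b :=
        add_lt_add (mul_lt_mul_of_pos_right htM hb) (mul_lt_mul_of_pos_right haM hb)
    _ = (barrettQuotient M a b + 2) * b * M := by ring

theorem emod_eq_ite_of_lt_two_mul {r : ℤ} (hr : 0 ≤ r) (hrb : r < 2 * b) :
    r % b = if r < b then r else r - b := by
  split_ifs with h
  · exact emod_eq_of_lt hr h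
  · rw [← sub_emod_right, emod_eq_of_lt (by omega) (by omega)]

end Int

theorem stmt_17_general (a b : ℤ) (m : ℕ) (ha : 0 < a) (hb : 0 < b)
    (ham : a < 2 ^ m)
    (q r : ℤ) (hq : q = 2 ^ (m + 1) / b) (hr : r = a - a * q / 2 ^ (m + 1) * b) :
    0 ≤ r ∧ r < 2 * b ∧ a % b = (if r < b then r else r - b) := by
  have haM : a < 2 ^ (m + 1) := ham.trans (pow_lt_pow_right₀ one_lt_two m.lt_succ_self)
  have hr' : r = a - Int.barrettQuotient (2 ^ (m + 1)) a b * b := by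
    rw [hr, hq, Int.barrettQuotient]
  have hr0 : 0 ≤ r := by
    rw [hr', sub_nonneg]
    exact Int.barrettQuotient_mul_le (by positivity) ha.le hb
  have hr2b : r < 2 * b := by
    have := Int.lt_barrettQuotient_add_two_mul ha.le haM hb
    rw [hr']
    linarith
  refine ⟨hr0, hr2b, ?_⟩
  rw [← Int.emod_eq_ite_of_lt_two_mul hr0 hr2b, hr', Int.sub_mul_emod_self_right]

theorem stmt_17 (a b : ℤ) (n m : ℕ) (ha : 0 < a) (hb : 0 < b)
    (hn : n = Nat.size b.toNat) (hm : m = Nat.size a.toNat)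
    (ham : a < 2 ^ m) (hab : a < b ^ 2)
    (q r : ℤ) (hq : q = 2 ^ (m + 1) / b) (hr : r = a - a * q / 2 ^ (m + 1) * b) :
    0 ≤ r ∧ r < 2 * b ∧ a % b = (if r < b then r else r - b) :=
  stmt_17_general a b m ha hb ham q r hq hr
end

section
/- Correctness of CRT-based iterated multiplication: let x_1, ..., x_k be positive integers and p_1, ..., p_h distinct primes with Π p_i > Π x_j. For each i, let g_i be a generator of (ℤ/p_iℤ)*, let r_{i,j} = log_{g_i}(x_j mod p_i) (assuming p_i ∤ x_j for all j), and let y_i = g_i^{Σ_j r_{i,j} mod (p_i - 1)} mod p_i. Then the unique y with 0 ≤ y < Π p_i and y ≡ y_i (mod p_i) for all i equals Π_{j=1}^k x_j. -/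
/-!
Modulo each prime `p i`, Fermat's little theorem lets the exponent `∑ j, r i j` be reduced
mod `p i - 1`, so `y ≡ ∏ j, x j` modulo every `p i`. By the Chinese remainder theorem the two
agree modulo `∏ i, p i`, and both lie below it.
-/

open Function

theorem Nat.eq_of_natCast_eq_of_lt_prod {ι : Type*} [Fintype ι] {m : ι → ℕ}
    (hm : Pairwise (Nat.Coprime on m)) {a b : ℕ} (ha : a < ∏ i, m i) (hb : b < ∏ i, m i)
    (h : ∀ i, (a : ZMod (m i)) = b) : a = b := by
  have hprod : (a : ZMod (∏ i, m i)) = b :=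
    (ZMod.prodEquivPi m hm).injective <| funext fun i => by simpa using h i
  exact ((ZMod.natCast_eq_natCast_iff _ _ _).1 hprod).eq_of_lt_of_lt ha hb

theorem ZMod.units_pow_mod_sub_one {p : ℕ} [Fact p.Prime] (u : (ZMod p)ˣ) (n : ℕ) :
    (u : ZMod p) ^ (n % (p - 1)) = (u : ZMod p) ^ n := by
  rw [← Units.val_pow_eq_pow_val, ← Units.val_pow_eq_pow_val, ← pow_mod_orderOf,
    Nat.mod_mod_of_dvd _ (ZMod.orderOf_units_dvd_card_sub_one u), pow_mod_orderOf]

theorem stmt_19_general (k h : ℕ) (x : Fin k → ℕ) (p : Fin h → ℕ)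
    (hp : ∀ i, (p i).Prime) (hdist : Function.Injective p)
    (hbig : ∏ j, x j < ∏ i, p i)
    (g : (i : Fin h) → (ZMod (p i))ˣ)
    (r : Fin h → Fin k → ℕ)
    (hr : ∀ i j, ((g i : ZMod (p i)) ^ (r i j)) = ((x j : ZMod (p i))))
    (y : ℕ) (hy : y < ∏ i, p i)
    (hcrt : ∀ i, (y : ZMod (p i)) = (g i : ZMod (p i)) ^ ((∑ j, r i j) % (p i - 1))) :
    y = ∏ j, x j := by
  have hres : ∀ i, (y : ZMod (p i)) = ((∏ j, x j : ℕ) : ZMod (p i)) := by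
    intro i
    have := Fact.mk (hp i)
    rw [hcrt i, ZMod.units_pow_mod_sub_one, ← Finset.prod_pow_eq_pow_sum, Nat.cast_prod]
    exact Finset.prod_congr rfl fun j _ => hr i j
  have hcop : Pairwise (Nat.Coprime on p) := fun i j hij =>
    (Nat.coprime_primes (hp i) (hp j)).2 (hdist.ne hij)
  exact Nat.eq_of_natCast_eq_of_lt_prod hcop hy hbig hres

theorem stmt_19 (k h : ℕ) (x : Fin k → ℕ) (p : Fin h → ℕ)
    (hx : ∀ j, 0 < x j) (hp : ∀ i, (p i).Prime) (hdist : Function.Injective p)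
    (hbig : ∏ j, x j < ∏ i, p i)
    (g : (i : Fin h) → (ZMod (p i))ˣ)
    (hg : ∀ i, ∀ u : (ZMod (p i))ˣ, u ∈ Subgroup.zpowers (g i))
    (hnd : ∀ i j, ¬ (p i ∣ x j))
    (r : Fin h → Fin k → ℕ)
    (hr : ∀ i j, ((g i : ZMod (p i)) ^ (r i j)) = ((x j : ZMod (p i))))
    (y : ℕ) (hy : y < ∏ i, p i)
    (hcrt : ∀ i, (y : ZMod (p i)) = (g i : ZMod (p i)) ^ ((∑ j, r i j) % (p i - 1))) :
    y = ∏ j, x j :=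
  stmt_19_general k h x p hp hdist hbig g r hr y hy hcrt
end
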